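/- arXiv:1804.01733 — 5 statements merged into one kernel-verified Lean document; each statement's English description precedes it below -/
import Mathlib

section
/- For r ∈ K let g_r = (1, r) ∈ P_K⁺ and let (𝒪₊*)_r := {u ∈ 𝒪₊* : (u − 1)r ∈ 𝒪}. Then (𝒪₊*)_r is a subgroup of finite index in 𝒪₊*, and the number of right cosets of Γ = P_𝒪⁺ contained in the double coset Γ g_r Γ, i.e. the cardinality of {Γh : h ∈ Γg_rΓ}, equals the index [𝒪₊* : (𝒪₊*)_r], which also equals the cardinality of the orbit {ur + 𝒪 : u ∈ 𝒪₊*} of r + 𝒪 in K/𝒪 under the multiplication action of 𝒪₊*. -/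
/-- An element of a number field is *totally positive* if it is positive in every
real embedding. -/
def TotallyPositive (K : Type*) [Field K] (x : K) : Prop :=
  ∀ φ : K →+* ℝ, 0 < φ x

/-- The `ax + b` group of a field `K`: pairs `(a, b)` with `a ∈ Kˣ`, `b ∈ K`, acting as
`t ↦ a * t + b`, with composition as group law. -/
@[ext]
structure AffPair (K : Type*) [Field K] where
  a : Kˣ
  b : K

namespace AffPair

variable {K : Type*} [Field K]

instance : Mul (AffPair K) := ⟨fun p q => ⟨p.a * q.a, p.b + (p.a : K) * q.b⟩⟩
instance : One (AffPair K) := ⟨⟨1, 0⟩⟩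
instance : Inv (AffPair K) := ⟨fun p => ⟨p.a⁻¹, -(((p.a⁻¹ : Kˣ) : K) * p.b)⟩⟩

@[simp] lemma mul_a (p q : AffPair K) : (p * q).a = p.a * q.a := rfl
@[simp] lemma mul_b (p q : AffPair K) : (p * q).b = p.b + (p.a : K) * q.b := rfl
@[simp] lemma one_a : (1 : AffPair K).a = 1 := rfl
@[simp] lemma one_b : (1 : AffPair K).b = 0 := rfl
@[simp] lemma inv_a (p : AffPair K) : (p⁻¹).a = p.a⁻¹ := rfl
@[simp] lemma inv_b (p : AffPair K) : (p⁻¹).b = -(((p.a⁻¹ : Kˣ) : K) * p.b) := rfl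

instance : Group (AffPair K) where
  mul_assoc p q r := by
    ext
    · simp [mul_assoc]
    · simp [mul_add, mul_assoc, add_assoc]
  one_mul p := by ext <;> simp
  mul_one p := by ext <;> simp
  inv_mul_cancel p := by
    ext
    · simp
    · simp

end AffPair

/-- The subgroup `P_𝒪⁺ ⊆ P_K⁺` of affine transformations whose linear coefficient is a
totally positive unit of the ring of integers and whose translation part is an algebraic
integer, viewed as a subset of the affine group. -/
def GammaSet (K : Type*) [Field K] : Set (AffPair K) :=
  {p | TotallyPositive K (p.a : K) ∧ IsIntegral ℤ ((p.a : K)) ∧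
    IsIntegral ℤ (((p.a⁻¹ : Kˣ) : K)) ∧ IsIntegral ℤ p.b}

/-- The double coset `Γ g Γ` where `Γ = P_𝒪⁺`. -/
def doubleCoset (K : Type*) [Field K] (g : AffPair K) : Set (AffPair K) :=
  {h | ∃ γ₁ ∈ GammaSet K, ∃ γ₂ ∈ GammaSet K, h = γ₁ * g * γ₂}

/-- The collection of left cosets `hΓ` with `h ∈ ΓgΓ`. -/
def leftCosetsIn (K : Type*) [Field K] (g : AffPair K) : Set (Set (AffPair K)) :=
  {C | ∃ h ∈ doubleCoset K g, C = (fun γ => h * γ) '' GammaSet K}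

/-- The collection of right cosets `Γh` with `h ∈ ΓgΓ`. -/
def rightCosetsIn (K : Type*) [Field K] (g : AffPair K) : Set (Set (AffPair K)) :=
  {C | ∃ h ∈ doubleCoset K g, C = (fun γ => γ * h) '' GammaSet K}

/-- The group `𝒪₊*` of totally positive units of the ring of integers of `K`,
as a subgroup of `Kˣ`. -/
def UnitsPos (K : Type*) [Field K] : Subgroup Kˣ where
  carrier := {u : Kˣ | TotallyPositive K (u : K) ∧ IsIntegral ℤ ((u : K)) ∧
    IsIntegral ℤ (((u⁻¹ : Kˣ) : K))}
  one_mem' := by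
    refine ⟨fun φ => by simp, by simpa using isIntegral_one, by simpa using isIntegral_one⟩
  mul_mem' := by
    rintro u v ⟨hu1, hu2, hu3⟩ ⟨hv1, hv2, hv3⟩
    refine ⟨fun φ => ?_, ?_, ?_⟩
    · rw [Units.val_mul, map_mul]
      exact mul_pos (hu1 φ) (hv1 φ)
    · rw [Units.val_mul]
      exact hu2.mul hv2
    · rw [mul_inv_rev, Units.val_mul]
      exact hv3.mul hu3
  inv_mem' := by
    rintro u ⟨h1, h2, h3⟩
    refine ⟨fun φ => ?_, h3, by simpa using h2⟩
    rw [Units.val_inv_eq_inv_val, map_inv₀]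
    exact inv_pos.2 (h1 φ)

/-- The subgroup `(𝒪₊*)_r = {u ∈ 𝒪₊* : (u - 1)·r ∈ 𝒪}` of `𝒪₊*`, i.e. the stabilizer of
`r + 𝒪` for the multiplication action of `𝒪₊*` on `K/𝒪`. -/
def stabSub (K : Type*) [Field K] (r : K) : Subgroup (UnitsPos K) where
  carrier := {u | IsIntegral ℤ ((((u : Kˣ) : K) - 1) * r)}
  one_mem' := by simpa using isIntegral_zero
  mul_mem' := by
    intro u v hu hv
    show IsIntegral ℤ (((((u * v : UnitsPos K) : Kˣ) : K) - 1) * r)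
    have key : ((((u * v : UnitsPos K) : Kˣ) : K) - 1) * r
        = (((u : Kˣ) : K)) * (((((v : Kˣ) : K)) - 1) * r) + ((((u : Kˣ) : K) - 1) * r) := by
      push_cast
      ring
    rw [key]
    exact (u.2.2.1.mul hv).add hu
  inv_mem' := by
    intro u hu
    show IsIntegral ℤ (((((u⁻¹ : UnitsPos K) : Kˣ) : K) - 1) * r)
    have h2 : IsIntegral ℤ ((((u : Kˣ)⁻¹ : Kˣ) : K)) := u.2.2.2
    have key : ((((u⁻¹ : UnitsPos K) : Kˣ) : K) - 1) * r
        = -((((u : Kˣ)⁻¹ : Kˣ) : K)) * ((((u : Kˣ) : K) - 1) * r) := by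
      have h0 : ((u : Kˣ) : K) ≠ 0 := Units.ne_zero _
      push_cast [Units.val_inv_eq_inv_val]
      field_simp
      ring
    rw [key]
    exact (h2.neg).mul hu
  
/-- The ring of integers `𝒪` of `K` as an additive subgroup of `K`. -/
def intAddSubgroup (K : Type*) [Field K] : AddSubgroup K where
  carrier := {x : K | IsIntegral ℤ x}
  zero_mem' := isIntegral_zero
  add_mem' := fun h1 h2 => h1.add h2
  neg_mem' := fun h => h.neg

/-!
Write `h = (a, b)` with `a ∈ 𝒪₊*`. Then `Γ h` is determined by the class `a⁻¹ b + 𝒪`, and for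
`h = γ₁ g_r γ₂` this class is `u r + 𝒪` with `u = γ₂.a⁻¹`, while `(u⁻¹, r) ∈ Γ g_r Γ` realises
every `u r + 𝒪`. Hence the right cosets in `Γ g_r Γ` correspond to the `𝒪₊*`-orbit of `r + 𝒪`,
whose size is the index of its stabilizer `(𝒪₊*)_r`. The orbit is finite because, for `m r ∈ 𝒪`,
it lies in the image of `𝒪 → K/𝒪, x ↦ x/m + 𝒪`, a finitely generated group killed by `m`.
-/

open NumberField

lemma Setoid.card_range_eq_of_ker_eq {α β γ : Type*} {f : α → β} {g : α → γ}
    (h : Setoid.ker f = Setoid.ker g) : Nat.card (Set.range f) = Nat.card (Set.range g) := by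
  rw [← Nat.card_congr (Setoid.quotientKerEquivRange f),
    ← Nat.card_congr (Setoid.quotientKerEquivRange g), h]

lemma AddMonoidHom.finite_range_of_nsmul_eq_zero {A B : Type*} [AddGroup A] [AddGroup.FG A]
    [AddCommGroup B] (f : A →+ B) {m : ℕ} (hm : m ≠ 0) (hf : ∀ a, m • f a = 0) :
    (Set.range f).Finite := by
  have : Finite f.range := AddCommGroup.finite_of_fg_isAddTorsion _ fun ⟨_, a, ha⟩ =>
    isOfFinAddOrder_iff_nsmul_eq_zero.2 ⟨m, Nat.pos_of_ne_zero hm, Subtype.ext (ha ▸ hf a)⟩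
  rw [← AddMonoidHom.coe_range]
  exact Set.toFinite _

section

variable {K : Type*} [Field K]

lemma UnitsPos.isIntegral_coe (u : UnitsPos K) : IsIntegral ℤ ((u : Kˣ) : K) :=
  u.2.2.1

lemma isIntegral_units_mul_iff {u : Kˣ} (hu : IsIntegral ℤ (u : K))
    (hu' : IsIntegral ℤ ((u⁻¹ : Kˣ) : K)) {x : K} :
    IsIntegral ℤ ((u : K) * x) ↔ IsIntegral ℤ x := by
  refine ⟨fun h => ?_, hu.mul⟩
  simpa [Units.val_inv_eq_inv_val] using hu'.mul h

variable (K) in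
def gammaSubgroup : Subgroup (AffPair K) where
  carrier := GammaSet K
  one_mem' := ⟨fun φ => by simp, by simpa using isIntegral_one, by simpa using isIntegral_one,
    isIntegral_zero⟩
  mul_mem' := by
    rintro p q ⟨hp₁, hp₂, hp₃, hp₄⟩ ⟨hq₁, hq₂, hq₃, hq₄⟩
    refine ⟨fun φ => ?_, ?_, ?_, hp₄.add (hp₂.mul hq₄)⟩
    · simpa using mul_pos (hp₁ φ) (hq₁ φ)
    · simpa using hp₂.mul hq₂
    · simpa using hq₃.mul hp₃
  inv_mem' := by
    rintro p ⟨h₁, h₂, h₃, h₄⟩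
    refine ⟨fun φ => ?_, by simpa using h₃, by simpa using h₂, (h₃.mul h₄).neg⟩
    simpa [Units.val_inv_eq_inv_val] using h₁ φ

lemma image_mul_right_gammaSet_eq_iff {h h' : AffPair K} :
    (· * h) '' GammaSet K = (· * h') '' GammaSet K ↔ h' * h⁻¹ ∈ GammaSet K := by
  have h_coset := rightCoset_eq_iff (s := gammaSubgroup K) (x := h) (y := h')
  simp only [← Set.image_smul, op_smul_eq_mul] at h_coset
  exact h_coset

/-- `h = (h.a, 0) * (1, innerShift h)`, i.e. `h t = h.a * (t + innerShift h)`. -/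
def AffPair.innerShift (h : AffPair K) : K := ((h.a⁻¹ : Kˣ) : K) * h.b

open AffPair

lemma mul_inv_mem_gammaSet_iff {h h' : AffPair K} (ha : h.a ∈ UnitsPos K)
    (ha' : h'.a ∈ UnitsPos K) :
    h' * h⁻¹ ∈ GammaSet K ↔ IsIntegral ℤ (innerShift h' - innerShift h) := by
  obtain ⟨ha₁, ha₂, ha₃⟩ := ha
  obtain ⟨ha'₁, ha'₂, ha'₃⟩ := ha'
  have hb : (h' * h⁻¹).b = (h'.a : K) * (innerShift h' - innerShift h) := by
    simp only [innerShift, mul_b, inv_b, Units.val_inv_eq_inv_val]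
    field_simp
    ring
  refine ⟨fun hmem => (isIntegral_units_mul_iff ha'₂ ha'₃).mp (hb ▸ hmem.2.2.2),
    fun hI => ⟨fun φ => ?_, ?_, ?_, hb ▸ ha'₂.mul hI⟩⟩
  · simpa [Units.val_inv_eq_inv_val] using mul_pos (ha'₁ φ) (inv_pos.2 (ha₁ φ))
  · simpa using ha'₂.mul ha₃
  · simpa using ha₂.mul ha'₃

lemma a_mem_unitsPos_of_mem_doubleCoset {r : K} {h : AffPair K}
    (hh : h ∈ doubleCoset K ⟨1, r⟩) : h.a ∈ UnitsPos K := by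
  obtain ⟨γ₁, ⟨h₁₁, h₁₂, h₁₃, -⟩, γ₂, ⟨h₂₁, h₂₂, h₂₃, -⟩, rfl⟩ := hh
  simpa using (UnitsPos K).mul_mem ⟨h₁₁, h₁₂, h₁₃⟩ ⟨h₂₁, h₂₂, h₂₃⟩

lemma exists_isIntegral_innerShift_sub_of_mem_doubleCoset {r : K} {h : AffPair K}
    (hh : h ∈ doubleCoset K ⟨1, r⟩) :
    ∃ u : UnitsPos K, IsIntegral ℤ (innerShift h - ((u : Kˣ) : K) * r) := by
  obtain ⟨γ₁, ⟨-, -, h₁₃, h₁₄⟩, γ₂, ⟨h₂₁, h₂₂, h₂₃, h₂₄⟩, rfl⟩ := hh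
  refine ⟨(⟨γ₂.a, h₂₁, h₂₂, h₂₃⟩ : UnitsPos K)⁻¹, ?_⟩
  show IsIntegral ℤ (innerShift _ - ((γ₂.a⁻¹ : Kˣ) : K) * r)
  have key : innerShift (γ₁ * ⟨1, r⟩ * γ₂) - ((γ₂.a⁻¹ : Kˣ) : K) * r
      = ((γ₂.a⁻¹ : Kˣ) : K) * (((γ₁.a⁻¹ : Kˣ) : K) * γ₁.b) + ((γ₂.a⁻¹ : Kˣ) : K) * γ₂.b := by
    simp only [innerShift, mul_a, mul_b, mul_one, mul_inv_rev, Units.val_mul,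
      Units.val_inv_eq_inv_val]
    field_simp
    ring
  rw [key]
  exact (h₂₃.mul (h₁₃.mul h₁₄)).add (h₂₃.mul h₂₄)

lemma mk_inv_mem_doubleCoset (r : K) (u : UnitsPos K) :
    (⟨(u : Kˣ)⁻¹, r⟩ : AffPair K) ∈ doubleCoset K ⟨1, r⟩ := by
  obtain ⟨hu₁, hu₂, hu₃⟩ := u.2
  refine ⟨1, (gammaSubgroup K).one_mem, ⟨(u : Kˣ)⁻¹, 0⟩, ⟨fun φ => ?_, hu₃, ?_, isIntegral_zero⟩, ?_⟩
  · simpa [Units.val_inv_eq_inv_val] using hu₁ φ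
  · simp [hu₂]
  · ext <;> simp

lemma innerShift_mk_inv (r : K) (u : Kˣ) : innerShift (⟨u⁻¹, r⟩ : AffPair K) = u * r := by
  simp [innerShift]

def rightCosetOfUnit (r : K) (u : UnitsPos K) : rightCosetsIn K ⟨1, r⟩ :=
  ⟨_, _, mk_inv_mem_doubleCoset r u, rfl⟩

lemma rightCosetOfUnit_surjective (r : K) : Function.Surjective (rightCosetOfUnit r) := by
  rintro ⟨_, h, hh, rfl⟩
  obtain ⟨u, hu⟩ := exists_isIntegral_innerShift_sub_of_mem_doubleCoset hh
  refine ⟨u, Subtype.ext ?_⟩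
  rw [rightCosetOfUnit, image_mul_right_gammaSet_eq_iff,
    mul_inv_mem_gammaSet_iff (inv_mem u.2) (a_mem_unitsPos_of_mem_doubleCoset hh),
    innerShift_mk_inv]
  exact hu

instance : MulAction (UnitsPos K) (K ⧸ intAddSubgroup K) where
  smul u := QuotientAddGroup.map (intAddSubgroup K) (intAddSubgroup K)
    (AddMonoidHom.mulLeft ((u : Kˣ) : K))
    fun x (hx : IsIntegral ℤ x) => ((UnitsPos.isIntegral_coe u).mul hx : IsIntegral ℤ _)
  one_smul x := by
    induction x using QuotientAddGroup.induction_on with | H x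
    change ((((1 : UnitsPos K) : Kˣ) : K) * x : K ⧸ intAddSubgroup K) = x
    simp
  mul_smul u v x := by
    induction x using QuotientAddGroup.induction_on with | H x
    change ((((u * v : UnitsPos K) : Kˣ) : K) * x : K ⧸ intAddSubgroup K)
      = ((((u : Kˣ) : K) * (((v : Kˣ) : K) * x) : K) : K ⧸ intAddSubgroup K)
    simp [mul_assoc]

lemma unitsPos_smul_mk (u : UnitsPos K) (x : K) :
    u • (x : K ⧸ intAddSubgroup K) = (((u : Kˣ) : K) * x : K) :=
  rfl

lemma stabilizer_mk_eq_stabSub (r : K) :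
    MulAction.stabilizer (UnitsPos K) (r : K ⧸ intAddSubgroup K) = stabSub K r := by
  ext u
  rw [MulAction.mem_stabilizer_iff, unitsPos_smul_mk, QuotientAddGroup.eq]
  change IsIntegral ℤ _ ↔ IsIntegral ℤ _
  rw [← IsIntegral.neg_iff, neg_add, neg_neg, ← sub_eq_add_neg, sub_one_mul]

lemma rightCosetOfUnit_eq_iff (r : K) (u v : UnitsPos K) :
    rightCosetOfUnit r u = rightCosetOfUnit r v ↔
      u • (r : K ⧸ intAddSubgroup K) = v • (r : K ⧸ intAddSubgroup K) := by
  rw [Subtype.ext_iff]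
  refine image_mul_right_gammaSet_eq_iff.trans ?_
  rw [mul_inv_mem_gammaSet_iff (inv_mem u.2) (inv_mem v.2),
    innerShift_mk_inv, innerShift_mk_inv, unitsPos_smul_mk, unitsPos_smul_mk, QuotientAddGroup.eq,
    neg_add_eq_sub]
  rfl

lemma finite_orbit_mk [NumberField K] (r : K) :
    (MulAction.orbit (UnitsPos K) (r : K ⧸ intAddSubgroup K)).Finite := by
  obtain ⟨m, s, hm, hms⟩ :=
    (IsFractionRing.isAlgebraic_iff ℤ ℚ K |>.mpr (.of_finite ℚ r)).exists_nsmul_eq (𝓞 K)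
  -- `u • (r + 𝒪) = (u * s) / m + 𝒪` with `u * s ∈ 𝓞 K`, and `m` kills every `x / m + 𝒪`
  let divide : 𝓞 K →+ K ⧸ intAddSubgroup K := (QuotientAddGroup.mk' _).comp
    ((AddMonoidHom.mulLeft (m : K)⁻¹).comp (algebraMap (𝓞 K) K).toAddMonoidHom)
  have divide_apply (x : 𝓞 K) : divide x = ((m : K)⁻¹ * algebraMap (𝓞 K) K x : K) := rfl
  have h_divide : (Set.range divide).Finite := by
    refine divide.finite_range_of_nsmul_eq_zero hm fun x => ?_
    rw [← map_nsmul, divide_apply, QuotientAddGroup.eq_zero_iff]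
    change IsIntegral ℤ _
    simpa [hm] using x.isIntegral_coe
  refine h_divide.subset ?_
  rintro _ ⟨u, rfl⟩
  obtain ⟨y, hy⟩ := IsIntegralClosure.isIntegral_iff (A := 𝓞 K) |>.mp
    ((UnitsPos.isIntegral_coe u).mul s.isIntegral_coe)
  refine ⟨y, ?_⟩
  rw [divide_apply, hy, ← hms, nsmul_eq_mul, mul_left_comm, inv_mul_cancel_left₀ (by simpa)]
  rfl

end

/-- For `r ∈ K`, let `g_r = (1, r) ∈ P_K⁺` and
`(𝒪₊*)_r = {u ∈ 𝒪₊* : (u − 1)r ∈ 𝒪}`. Then `(𝒪₊*)_r` has finite index in `𝒪₊*`, and the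
number of right cosets of `Γ = P_𝒪⁺` contained in the double coset `Γ g_r Γ` equals the index
`[𝒪₊* : (𝒪₊*)_r]`, which also equals the cardinality of the orbit `{ur + 𝒪 : u ∈ 𝒪₊*}` of
`r + 𝒪` in `K/𝒪` under the multiplication action of `𝒪₊*`. -/
theorem card_rightCosets_eq_index_stab (K : Type*) [Field K] [NumberField K] (r : K) :
    (stabSub K r).FiniteIndex ∧
      Nat.card ↥(rightCosetsIn K (⟨1, r⟩ : AffPair K)) = (stabSub K r).index ∧
      (stabSub K r).index =
        Nat.card ↥(Set.range fun u : UnitsPos K =>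
          (QuotientAddGroup.mk (((u : Kˣ) : K) * r) : K ⧸ intAddSubgroup K)) := by
  set orbit := MulAction.orbit (UnitsPos K) (r : K ⧸ intAddSubgroup K)
  have h_index : (stabSub K r).index = Nat.card orbit := by
    rw [← stabilizer_mk_eq_stabSub, MulAction.index_stabilizer, Nat.card_coe_set_eq]
  have h_cosets : Nat.card (rightCosetsIn K ⟨1, r⟩) = Nat.card orbit :=
    calc Nat.card (rightCosetsIn K ⟨1, r⟩)
        = Nat.card (Set.range (rightCosetOfUnit r)) := by
          rw [(rightCosetOfUnit_surjective r).range_eq, Nat.card_univ]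
      _ = Nat.card orbit :=
          Setoid.card_range_eq_of_ker_eq (Setoid.ext (rightCosetOfUnit_eq_iff r))
  have : Finite orbit := (finite_orbit_mk r).to_subtype
  refine ⟨⟨?_⟩, h_cosets.trans h_index.symm, h_index⟩
  rw [h_index, Nat.card_ne_zero]
  exact ⟨(MulAction.nonempty_orbit _).to_subtype, this⟩
end

section
/- For every nonzero totally positive element a ∈ 𝒪, let g_a = (a, 0) ∈ P_K⁺ and Γ = P_𝒪⁺. Then the double coset Γ g_a Γ equals the single right coset Γ g_a (so |{Γh : h ∈ Γg_aΓ}| = 1), and the number of left cosets of Γ contained in Γ g_a Γ, i.e. |{hΓ : h ∈ Γg_aΓ}|, equals the absolute norm N_a = |𝒪/a𝒪| of the ideal a𝒪. -/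
open AffPair

/-
Conjugation by `g = (a, 0)` multiplies translation parts by `a`, so for integral `a` it maps
`Γ` into itself; hence `Γ g Γ = Γ g`. The left cosets inside `Γ g` are the cosets `(a, b) Γ`,
`b ∈ 𝒪`, and `(a, b) Γ = (a, b') Γ` exactly when `(a, b)⁻¹ (a, b') = (1, (b' - b) / a)` lies in
`Γ`, i.e. when `b ≡ b' mod a𝒪`.
-/

open NumberField Pointwise

theorem Nat.card_range_eq_of_surjective_of_eq_iff {X Q α : Type*} {π : X → Q}
    (hπ : Function.Surjective π) {f : X → α} (hf : ∀ x y, f x = f y ↔ π x = π y) :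
    Nat.card (Set.range f) = Nat.card Q := by
  have hfactor : (f ∘ Function.surjInv hπ) ∘ π = f :=
    funext fun x => (hf _ _).2 (Function.surjInv_eq hπ _)
  have hinj : Function.Injective (f ∘ Function.surjInv hπ) := fun q q' h => by
    simpa [Function.surjInv_eq hπ] using (hf _ _).1 h
  rw [← hfactor, hπ.range_comp, Nat.card_range_of_injective hinj]

theorem NumberField.RingOfIntegers.mem_span_singleton_iff_isIntegral {K : Type*} [Field K]
    {a : 𝓞 K} (ha : a ≠ 0) (x : 𝓞 K) :
    x ∈ Ideal.span {a} ↔ IsIntegral ℤ ((a : K)⁻¹ * x) := by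
  have ha' : (a : K) ≠ 0 := by exact_mod_cast ha
  rw [Ideal.mem_span_singleton']
  constructor
  · rintro ⟨c, rfl⟩
    convert c.isIntegral_coe using 1
    push_cast
    field_simp
  · intro h
    refine ⟨⟨_, h⟩, RingOfIntegers.ext ?_⟩
    change (a : K)⁻¹ * x * a = x
    field_simp

namespace AffPair

variable {K : Type*} [Field K]

/-- `GammaSet` as a subgroup, so that Mathlib's coset lemmas apply: `h • (gamma K : Set _)` and
`MulOpposite.op h • (gamma K : Set _)` unfold to the images used in `leftCosetsIn` and
`rightCosetsIn`. -/
def gamma (K : Type*) [Field K] : Subgroup (AffPair K) where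
  carrier := GammaSet K
  one_mem' := ⟨fun φ => by simp, by simpa using isIntegral_one, by simpa using isIntegral_one,
    by simpa using isIntegral_zero⟩
  mul_mem' := by
    rintro p q ⟨hp, hpI, hpI', hpb⟩ ⟨hq, hqI, hqI', hqb⟩
    refine ⟨fun φ => ?_, ?_, ?_, ?_⟩
    · simpa using mul_pos (hp φ) (hq φ)
    · simpa using hpI.mul hqI
    · simpa [mul_comm] using hpI'.mul hqI'
    · simpa using hpb.add (hpI.mul hqb)
  inv_mem' := by
    rintro p ⟨hp, hpI, hpI', hpb⟩
    refine ⟨fun φ => ?_, hpI', by simpa using hpI, by simpa using (hpI'.mul hpb).neg⟩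
    simpa using hp φ

lemma mk_one_mem_gammaSet_iff (x : K) : (⟨1, x⟩ : AffPair K) ∈ GammaSet K ↔ IsIntegral ℤ x :=
  ⟨fun h => h.2.2.2, fun h => ⟨fun φ => by simp, by simpa using isIntegral_one,
    by simpa using isIntegral_one, h⟩⟩

lemma mk_zero_mul_mul_inv_mem_gammaSet {u : Kˣ} (hu : IsIntegral ℤ (u : K)) {γ : AffPair K}
    (hγ : γ ∈ GammaSet K) : (⟨u, 0⟩ : AffPair K) * γ * (⟨u, 0⟩ : AffPair K)⁻¹ ∈ GammaSet K := by
  obtain ⟨hγP, hγI, hγI', hγb⟩ := hγ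
  have hconj : (⟨u, 0⟩ : AffPair K) * γ * (⟨u, 0⟩ : AffPair K)⁻¹ = ⟨γ.a, u * γ.b⟩ := by
    ext <;> simp
  rw [hconj]
  exact ⟨hγP, hγI, hγI', hu.mul hγb⟩

lemma mk_inv_mul_mk (u : Kˣ) (b b' : K) :
    (⟨u, b⟩ : AffPair K)⁻¹ * ⟨u, b'⟩ = ⟨1, (u : K)⁻¹ * (b' - b)⟩ := by
  ext
  · simp
  · simp; ring

lemma leftCoset_mk_eq_iff (u : Kˣ) (b b' : K) :
    (⟨u, b⟩ : AffPair K) • (gamma K : Set (AffPair K)) =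
        (⟨u, b'⟩ : AffPair K) • (gamma K : Set (AffPair K)) ↔
      IsIntegral ℤ ((u : K)⁻¹ * (b' - b)) := by
  rw [leftCoset_eq_iff, mk_inv_mul_mk]
  exact mk_one_mem_gammaSet_iff _

lemma doubleCoset_eq_of_conj_mem {g : AffPair K}
    (hg : ∀ γ ∈ GammaSet K, g * γ * g⁻¹ ∈ GammaSet K) :
    doubleCoset K g = (fun γ => γ * g) '' GammaSet K := by
  ext h
  constructor
  · rintro ⟨γ₁, hγ₁, γ₂, hγ₂, rfl⟩
    exact ⟨γ₁ * (g * γ₂ * g⁻¹), (gamma K).mul_mem hγ₁ (hg γ₂ hγ₂), by group⟩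
  · rintro ⟨γ, hγ, rfl⟩
    exact ⟨γ, hγ, 1, (gamma K).one_mem, (mul_one _).symm⟩

lemma rightCosetsIn_eq_singleton_of_conj_mem {g : AffPair K}
    (hg : ∀ γ ∈ GammaSet K, g * γ * g⁻¹ ∈ GammaSet K) :
    rightCosetsIn K g = {(fun γ => γ * g) '' GammaSet K} := by
  ext C
  constructor
  · rintro ⟨h, hh, rfl⟩
    rw [doubleCoset_eq_of_conj_mem hg] at hh
    obtain ⟨γ, hγ, rfl⟩ := hh
    change MulOpposite.op (γ * g) • (gamma K : Set (AffPair K)) =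
      MulOpposite.op g • (gamma K : Set (AffPair K))
    rw [rightCoset_eq_iff]
    simpa using (gamma K).inv_mem hγ
  · rintro rfl
    exact ⟨g, ⟨1, (gamma K).one_mem, 1, (gamma K).one_mem, by group⟩, rfl⟩

lemma leftCosetsIn_mk_zero {u : Kˣ} (hu : IsIntegral ℤ (u : K)) :
    leftCosetsIn K ⟨u, 0⟩ =
      Set.range fun b : 𝓞 K => (⟨u, b⟩ : AffPair K) • (gamma K : Set (AffPair K)) := by
  rw [leftCosetsIn, doubleCoset_eq_of_conj_mem fun _ => mk_zero_mul_mul_inv_mem_gammaSet hu]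
  ext C
  constructor
  · rintro ⟨_, ⟨γ, hγ, rfl⟩, rfl⟩
    have hγb : IsIntegral ℤ γ.b := hγ.2.2.2
    refine ⟨⟨γ.b, hγb⟩, ?_⟩
    change (⟨u, γ.b⟩ : AffPair K) • _ = (γ * _) • (gamma K : Set (AffPair K))
    have htranslate : (⟨1, γ.b⟩ : AffPair K) ∈ GammaSet K := (mk_one_mem_gammaSet_iff _).2 hγb
    have hquot : (⟨u, γ.b⟩ : AffPair K)⁻¹ * (γ * ⟨u, 0⟩) = (⟨1, γ.b⟩ : AffPair K)⁻¹ * γ := by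
      ext
      · simp [mul_comm]
      · simp
    rw [leftCoset_eq_iff, hquot]
    exact (gamma K).mul_mem ((gamma K).inv_mem htranslate) hγ
  · rintro ⟨b, rfl⟩
    refine ⟨⟨u, b⟩, ⟨⟨1, b⟩, (mk_one_mem_gammaSet_iff _).2 b.isIntegral_coe, ?_⟩, rfl⟩
    ext <;> simp

end AffPair

open AffPair

theorem doubleCoset_of_integer_general (K : Type*) [Field K]
    (a : K) (ha0 : a ≠ 0) (haI : IsIntegral ℤ a) :
    doubleCoset K (⟨Units.mk0 a ha0, 0⟩ : AffPair K) =
        (fun γ => γ * (⟨Units.mk0 a ha0, 0⟩ : AffPair K)) '' GammaSet K ∧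
      Nat.card ↥(rightCosetsIn K (⟨Units.mk0 a ha0, 0⟩ : AffPair K)) = 1 ∧
      Nat.card ↥(leftCosetsIn K (⟨Units.mk0 a ha0, 0⟩ : AffPair K)) =
        Nat.card (NumberField.RingOfIntegers K ⧸
          Ideal.span {(⟨a, haI⟩ : NumberField.RingOfIntegers K)}) := by
  have hconj (γ : AffPair K) (hγ : γ ∈ GammaSet K) :=
    mk_zero_mul_mul_inv_mem_gammaSet (u := Units.mk0 a ha0) haI hγ
  refine ⟨doubleCoset_eq_of_conj_mem hconj, ?_, ?_⟩
  · rw [rightCosetsIn_eq_singleton_of_conj_mem hconj, Nat.card_unique]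
  rw [leftCosetsIn_mk_zero haI]
  refine Nat.card_range_eq_of_surjective_of_eq_iff
    (Ideal.Quotient.mk_surjective (I := Ideal.span {(⟨a, haI⟩ : 𝓞 K)})) fun (b b' : 𝓞 K) => ?_
  have ha : (⟨a, haI⟩ : 𝓞 K) ≠ 0 := fun h => ha0 (congrArg Subtype.val h)
  rw [leftCoset_mk_eq_iff]
  exact ((RingOfIntegers.mem_span_singleton_iff_isIntegral ha _).symm.trans
    sub_mem_comm_iff).trans Ideal.Quotient.eq.symm

/-- For a nonzero totally positive algebraic integer `a`, with
`g_a = (a, 0) ∈ P_K⁺` and `Γ = P_𝒪⁺`: the double coset `Γ g_a Γ` is the single right coset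
`Γ g_a`, so there is exactly one right coset of `Γ` in it, and the number of left cosets of
`Γ` contained in `Γ g_a Γ` equals the absolute norm `N_a = |𝒪/a𝒪|`. -/
theorem doubleCoset_of_integer (K : Type*) [Field K] [NumberField K]
    (a : K) (ha0 : a ≠ 0) (haP : TotallyPositive K a) (haI : IsIntegral ℤ a) :
    doubleCoset K (⟨Units.mk0 a ha0, 0⟩ : AffPair K) =
        (fun γ => γ * (⟨Units.mk0 a ha0, 0⟩ : AffPair K)) '' GammaSet K ∧
      Nat.card ↥(rightCosetsIn K (⟨Units.mk0 a ha0, 0⟩ : AffPair K)) = 1 ∧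
      Nat.card ↥(leftCosetsIn K (⟨Units.mk0 a ha0, 0⟩ : AffPair K)) =
        Nat.card (NumberField.RingOfIntegers K ⧸
          Ideal.span {(⟨a, haI⟩ : NumberField.RingOfIntegers K)}) :=
  doubleCoset_of_integer_general K a ha0 haI
end

section
/- Assume the standing hypotheses (i) and (ii), let β be a nonzero real number, and suppose the family (N(s)^{-β})_{s ∈ S} is summable. Then every β-scaling Borel probability measure μ on X is concentrated on the orbit of Y₀: μ(Y ∖ Γ·Y₀) = 0, where Γ·Y₀ = ⋃_{γ ∈ Γ} γ·Y₀. -/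
open Pointwise MeasureTheory

/-- The boundary set `Y₀ = Y \ ⋃_{γ : N(γ) > 1} γ·Y` of the cocycle determined by `N`. -/
def boundarySet {Γ X : Type*} [Group Γ] [MulAction Γ X] (N : Γ →* ℝ) (Y : Set X) : Set X :=
  Y \ ⋃ (γ : Γ) (_ : 1 < N γ), γ • Y

/-- The set `S = {γ ∈ Γ : γ·Y₀ ∩ Y ≠ ∅}`. -/
def Sset {Γ X : Type*} [Group Γ] [MulAction Γ X] (N : Γ →* ℝ) (Y : Set X) : Set Γ :=
  {γ : Γ | ((γ • boundarySet N Y) ∩ Y).Nonempty}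

/-- A Borel probability measure `μ` on `X` is `β`-scaling if it is concentrated on `Y` and
`μ(γ·A) = N(γ)^{-β}·μ(A)` for every `γ ∈ Γ` and every Borel set `A ⊆ Y` with `γ·A ⊆ Y`. -/
def IsScaling {Γ X : Type*} [Group Γ] [MulAction Γ X] [MeasurableSpace X]
    (N : Γ →* ℝ) (Y : Set X) (β : ℝ) (μ : Measure X) : Prop :=
  μ Yᶜ = 0 ∧ ∀ (γ : Γ) (A : Set X), MeasurableSet A → A ⊆ Y → γ • A ⊆ Y →
    μ (γ • A) = ENNReal.ofReal (N γ ^ (-β)) * μ A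

/-!
Let `W = Γ·Y₀`. Since `W` is `Γ`-invariant, restricting `μ` to its complement gives a
`β`-scaling measure `ν` with `ν(Y₀) = 0`. The sets `Yₙ` are null, since a finite measure cannot
be rescaled by `N(γₙ)^{-β} ≠ 1` on a set fixed by `γₙ`. Hence, for every open `U ⊇ Y₀`,
hypothesis (i) covers `Y` up to a null set by the translates `s·(U ∩ Y)`, `s ∈ S`, so that
`ν(Y) ≤ (∑_{s ∈ S} N(s)^{-β}) · ν(U)`. Outer regularity makes `ν(U)` arbitrarily small.
-/

lemma Real.rpow_ne_one_of_ne_one {x y : ℝ} (hx : 0 < x) (hx₁ : x ≠ 1) (hy : y ≠ 0) :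
    x ^ y ≠ 1 := by
  have hlog : Real.log (x ^ y) ≠ 0 := by
    rw [Real.log_rpow hx]
    exact mul_ne_zero hy (Real.log_ne_zero_of_pos_of_ne_one hx hx₁)
  intro h
  rw [h, Real.log_one] at hlog
  exact hlog rfl

lemma Set.smul_iUnion_smul_set {Γ X : Type*} [Group Γ] [MulAction Γ X] (A : Set X) (s : Γ) :
    s • ⋃ γ : Γ, γ • A = ⋃ γ : Γ, γ • A := by
  simp only [Set.smul_set_iUnion, smul_smul]
  exact (mul_left_surjective s).iUnion_comp (fun γ => γ • A)

lemma MeasureTheory.measure_eq_zero_of_forall_isOpen_le_mul {X : Type*} [TopologicalSpace X]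
    [MeasurableSpace X] {μ : Measure X} [μ.OuterRegular] {K A : Set X} {C : ENNReal}
    (hC : C ≠ ⊤) (hK : μ K = 0) (h : ∀ U, IsOpen U → K ⊆ U → μ A ≤ C * μ U) :
    μ A = 0 := by
  refine nonpos_iff_eq_zero.1 (ENNReal.le_of_forall_pos_le_add fun ε hε _ => ?_)
  obtain ⟨U, hKU, hU, hμU⟩ := K.exists_isOpen_lt_of_lt (ε / C)
    (hK ▸ ENNReal.div_pos (by exact_mod_cast hε.ne') hC)
  calc μ A ≤ C * μ U := h U hU hKU
    _ ≤ C * (ε / C) := by gcongr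
    _ ≤ 0 + ε := by rw [zero_add]; exact ENNReal.mul_div_le

lemma isClosed_boundarySet {Γ X : Type*} [Group Γ] [TopologicalSpace X] [MulAction Γ X]
    [ContinuousConstSMul Γ X] (N : Γ →* ℝ) {Y : Set X} (hY : IsClopen Y) :
    IsClosed (boundarySet N Y) :=
  hY.isClosed.sdiff (isOpen_biUnion fun γ _ => hY.isOpen.smul γ)

namespace IsScaling

variable {Γ X : Type*} [Group Γ] [MulAction Γ X] [MeasurableSpace X]
  {N : Γ →* ℝ} {Y : Set X} {β : ℝ} {μ : Measure X}

lemma restrict (hμ : IsScaling N Y β μ) {Z : Set X} (hZ : MeasurableSet Z)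
    (hZinv : ∀ γ : Γ, γ • Z = Z) : IsScaling N Y β (μ.restrict Z) := by
  refine ⟨nonpos_iff_eq_zero.1 ((Measure.restrict_le_self _).trans_eq hμ.1),
    fun γ A hA hAY hγAY => ?_⟩
  rw [Measure.restrict_apply' hZ, Measure.restrict_apply' hZ, ← hZinv γ,
    ← Set.smul_set_inter, hZinv γ]
  exact hμ.2 γ _ (hA.inter hZ) (Set.inter_subset_left.trans hAY)
    ((Set.smul_set_mono Set.inter_subset_left).trans hγAY)

lemma measure_eq_zero_of_smul_eq [IsFiniteMeasure μ] (hμ : IsScaling N Y β μ) (hβ : β ≠ 0)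
    {γ : Γ} (hγ₀ : 0 < N γ) (hγ₁ : N γ ≠ 1) {A : Set X} (hA : MeasurableSet A)
    (hAY : A ⊆ Y) (hγA : γ • A = A) : μ A = 0 := by
  by_contra hA₀
  have hscale := hμ.2 γ A hA hAY (hγA.symm ▸ hAY)
  rw [hγA, eq_comm, ENNReal.mul_eq_right hA₀ (measure_ne_top μ A),
    ENNReal.ofReal_eq_one] at hscale
  exact Real.rpow_ne_one_of_ne_one hγ₀ hγ₁ (neg_ne_zero.2 hβ) hscale

lemma measure_smul_le [MeasurableConstSMul Γ X]
    (hμ : IsScaling N Y β μ) (hY : MeasurableSet Y) {U : Set X} (hU : MeasurableSet U)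
    (hUY : U ⊆ Y) (s : Γ) : μ (s • U) ≤ ENNReal.ofReal (N s ^ (-β)) * μ U := by
  -- `μ` lives on `Y`, and `s • U ∩ Y` is the translate of a part of `U` that `s` maps into `Y`
  have hsU : s • (U ∩ s⁻¹ • Y) = s • U ∩ Y := by rw [Set.smul_set_inter, smul_inv_smul]
  calc μ (s • U) = μ (s • (U ∩ s⁻¹ • Y)) := by rw [hsU, measure_inter_conull hμ.1]
    _ = ENNReal.ofReal (N s ^ (-β)) * μ (U ∩ s⁻¹ • Y) :=
      hμ.2 s _ (hU.inter (hY.const_smul _)) (Set.inter_subset_left.trans hUY)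
        (hsU ▸ Set.inter_subset_right)
    _ ≤ ENNReal.ofReal (N s ^ (-β)) * μ U := by gcongr; exact Set.inter_subset_left

lemma measure_le_tsum_mul [MeasurableConstSMul Γ X]
    (hμ : IsScaling N Y β μ) (hY : MeasurableSet Y) {S : Set Γ} (hS : S.Countable)
    {U : Set X} (hU : MeasurableSet U) (hUY : U ⊆ Y) (hcov : μ (Y \ ⋃ s ∈ S, s • U) = 0) :
    μ Y ≤ (∑' s : S, ENNReal.ofReal (N s ^ (-β))) * μ U :=
  calc μ Y = μ (Y ∩ ⋃ s ∈ S, s • U) := (measure_inter_conull' hcov).symm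
    _ ≤ μ (⋃ s ∈ S, s • U) := measure_mono Set.inter_subset_right
    _ ≤ ∑' s : S, μ (s.1 • U) := measure_biUnion_le μ hS _
    _ ≤ ∑' s : S, ENNReal.ofReal (N s ^ (-β)) * μ U :=
      ENNReal.tsum_le_tsum fun s => hμ.measure_smul_le hY hU hUY s
    _ = (∑' s : S, ENNReal.ofReal (N s ^ (-β))) * μ U := ENNReal.tsum_mul_right

end IsScaling

theorem scaling_measure_concentrated_on_orbit_of_boundary_general
    {Γ X : Type*} [Group Γ] [Countable Γ]
    [TopologicalSpace X] [LocallyCompactSpace X] [SecondCountableTopology X] [T2Space X]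
    [MeasurableSpace X] [BorelSpace X] [MulAction Γ X] [ContinuousConstSMul Γ X]
    (N : Γ →* ℝ) (hN : ∀ γ, 0 < N γ)
    (Y : Set X) (hY : IsClopen Y)
    (Yn : ℕ → Set X) (γn : ℕ → Γ)
    (hYnMeas : ∀ n, MeasurableSet (Yn n)) (hYnSub : ∀ n, Yn n ⊆ Y)
    (hi : ∀ U : Set X, IsOpen U → boundarySet N Y ⊆ U →
      Y \ (⋃ s ∈ Sset N Y, s • U) ⊆ ⋃ n, Yn n)
    (hii : ∀ n, N (γn n) ≠ 1 ∧ γn n • Yn n = Yn n)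
    (β : ℝ) (hβ : β ≠ 0)
    (hsum : Summable (fun s : Sset N Y => N s.1 ^ (-β)))
    (μ : Measure X) [IsProbabilityMeasure μ] (hμ : IsScaling N Y β μ) :
    μ (Y \ ⋃ γ : Γ, γ • boundarySet N Y) = 0 := by
  have hY₀ : IsClosed (boundarySet N Y) := isClosed_boundarySet N hY
  set W := ⋃ γ : Γ, γ • boundarySet N Y
  have hW : MeasurableSet W := .iUnion fun γ => (hY₀.smul γ).measurableSet
  set ν := μ.restrict Wᶜ
  have hν : IsScaling N Y β ν := hμ.restrict hW.compl fun γ => by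
    rw [Set.smul_set_compl, Set.smul_iUnion_smul_set]
  have hνW : ν W = 0 := by
    rw [Measure.restrict_apply' hW.compl, Set.inter_compl_self, measure_empty]
  have hνY₀ : ν (boundarySet N Y) = 0 :=
    measure_mono_null (fun x hx => Set.mem_iUnion.2 ⟨1, by simpa using hx⟩) hνW
  have hνYn : ν (⋃ n, Yn n) = 0 := nonpos_iff_eq_zero.1 <|
    (Measure.restrict_le_self _).trans_eq <| measure_iUnion_null fun n =>
      hμ.measure_eq_zero_of_smul_eq hβ (hN _) (hii n).1 (hYnMeas n) (hYnSub n) (hii n).2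
  rw [Set.sdiff_eq, ← Measure.restrict_apply' hW.compl]
  refine measure_eq_zero_of_forall_isOpen_le_mul hsum.tsum_ofReal_ne_top hνY₀
    fun U hU hY₀U => ?_
  have hUY : IsOpen (U ∩ Y) := hU.inter hY.isOpen
  have hcov : ν (Y \ ⋃ s ∈ Sset N Y, s • (U ∩ Y)) = 0 :=
    measure_mono_null (hi _ hUY (Set.subset_inter hY₀U Set.sdiff_subset)) hνYn
  calc ν Y ≤ _ * ν (U ∩ Y) := hν.measure_le_tsum_mul hY.isOpen.measurableSet
        (Set.to_countable _) hUY.measurableSet Set.inter_subset_right hcov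
    _ ≤ _ := by gcongr; exact Set.inter_subset_left

/-- Under the standing hypotheses (i) and (ii), for a nonzero `β ∈ ℝ` such
that `(N(s)^{-β})_{s ∈ S}` is summable, every `β`-scaling Borel probability measure `μ` on `X`
is concentrated on the orbit of the boundary set: `μ(Y \ Γ·Y₀) = 0`. -/
theorem scaling_measure_concentrated_on_orbit_of_boundary
    {Γ X : Type*} [Group Γ] [Countable Γ]
    [TopologicalSpace X] [LocallyCompactSpace X] [SecondCountableTopology X] [T2Space X]
    [MeasurableSpace X] [BorelSpace X] [MulAction Γ X] [ContinuousConstSMul Γ X]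
    (N : Γ →* ℝ) (hN : ∀ γ, 0 < N γ)
    (Y : Set X) (hY : IsClopen Y) (hYcov : (⋃ γ : Γ, γ • Y) = Set.univ)
    (Yn : ℕ → Set X) (γn : ℕ → Γ)
    (hYnMeas : ∀ n, MeasurableSet (Yn n)) (hYnSub : ∀ n, Yn n ⊆ Y)
    (hi : ∀ U : Set X, IsOpen U → boundarySet N Y ⊆ U →
      Y \ (⋃ s ∈ Sset N Y, s • U) ⊆ ⋃ n, Yn n)
    (hii : ∀ n, N (γn n) ≠ 1 ∧ γn n • Yn n = Yn n)
    (β : ℝ) (hβ : β ≠ 0)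
    (hsum : Summable (fun s : Sset N Y => N s.1 ^ (-β)))
    (μ : Measure X) [IsProbabilityMeasure μ] (hμ : IsScaling N Y β μ) :
    μ (Y \ ⋃ γ : Γ, γ • boundarySet N Y) = 0 :=
  scaling_measure_concentrated_on_orbit_of_boundary_general N hN Y hY Yn γn hYnMeas hYnSub hi hii β
    hβ hsum μ hμ
end

section
/- Assume the standing hypotheses (i) and (ii), let β be a nonzero real number, and suppose the family (N(s)^{-β})_{s ∈ S} is summable. Then every β-scaling Borel probability measure μ on X satisfies μ(Y ∖ Y₀) ≤ μ(Y₀) · Σ_{s ∈ S, N(s) > 1} N(s)^{-β}, and consequently μ(Y₀) ≥ (1 + Σ_{s ∈ S, N(s) > 1} N(s)^{-β})^{-1}. -/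
open Pointwise MeasureTheory

/-!
The sets `Yₙ` are `μ`-null: `γₙ` fixes `Yₙ` but rescales its measure by `N(γₙ)^{-β} ≠ 1`.
So for every open `U` with `Y₀ ⊆ U ⊆ Y`, almost all of `Y \ Y₀` is covered by the translates
`s • U`, `s ∈ S`. If `N(s) ≤ 1`, then `s` maps `Y₀ ∩ s⁻¹ • Y` into `Y₀`, hence
`(Y \ Y₀) ∩ s • U ⊆ Y ∩ s • (U \ Y₀)` and the scaling property bounds its measure by
`N(s)^{-β} μ(U \ Y₀)`; if `N(s) > 1` the bound is `N(s)^{-β} (μ(Y₀) + μ(U \ Y₀))`. Summing over `S`,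
`μ(Y \ Y₀) ≤ (∑_{s ∈ S, N(s) > 1} N(s)^{-β}) μ(Y₀) + (∑_{s ∈ S} N(s)^{-β}) μ(U \ Y₀)`,
and outer regularity lets `μ(U \ Y₀) → 0`. The second bound follows from
`1 = μ(Y) ≤ μ(Y₀) + μ(Y \ Y₀)`.
-/

open Filter Topology Set
open scoped ENNReal

theorem ENNReal.le_of_forall_pos_le_add_mul {a b c : ℝ≥0∞} (hc : c ≠ ∞)
    (h : ∀ ε : ℝ≥0∞, 0 < ε → a ≤ b + c * ε) : a ≤ b := by
  have hlim : Tendsto (fun ε => b + c * ε) (𝓝[>] 0) (𝓝 b) := by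
    have hid : Tendsto (fun ε : ℝ≥0∞ => ε) (𝓝[>] 0) (𝓝 0) :=
      tendsto_nhdsWithin_of_tendsto_nhds tendsto_id
    simpa using (tendsto_const_nhds (x := b)).add (ENNReal.Tendsto.const_mul hid (Or.inr hc))
  exact ge_of_tendsto hlim (eventually_nhdsWithin_of_forall h)

theorem measure_le_tsum_inter_of_sdiff_subset_null {α ι : Type*} [MeasurableSpace α]
    {μ : Measure α} {A Z : Set α} {T : Set ι} {B : ι → Set α} (hT : T.Countable)
    (hZ : μ Z = 0) (hA : A \ ⋃ i ∈ T, B i ⊆ Z) : μ A ≤ ∑' i : T, μ (A ∩ B i) :=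
  calc μ A ≤ μ (Z ∪ ⋃ i ∈ T, A ∩ B i) := measure_mono fun x hx => by
        by_cases hB : x ∈ ⋃ i ∈ T, B i
        · obtain ⟨i, hi, hxi⟩ := mem_iUnion₂.mp hB
          exact Or.inr (mem_biUnion hi ⟨hx, hxi⟩)
        · exact Or.inl (hA ⟨hx, hB⟩)
    _ ≤ μ Z + μ (⋃ i ∈ T, A ∩ B i) := measure_union_le _ _
    _ ≤ ∑' i : T, μ (A ∩ B i) := by rw [hZ, zero_add]; exact measure_biUnion_le μ hT _

theorem one_le_one_add_mul_of_measure_sdiff_le {α : Type*} [MeasurableSpace α] {μ : Measure α}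
    [IsProbabilityMeasure μ] {Y A : Set α} (hY : MeasurableSet Y) (hYc : μ Yᶜ = 0) {c : ℝ≥0∞}
    (h : μ (Y \ A) ≤ μ A * c) : 1 ≤ (1 + c) * μ A :=
  calc 1 = μ Y := ((prob_compl_eq_zero_iff hY).mp hYc).symm
    _ ≤ μ (Y ∩ A) + μ (Y \ A) := measure_le_inter_add_sdiff μ _ _
    _ ≤ μ A + μ A * c := add_le_add (measure_mono inter_subset_right) h
    _ = (1 + c) * μ A := by ring

theorem Summable.subtype_and {α β : Type*} [UniformSpace α] [AddCommGroup α]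
    [IsUniformAddGroup α] [CompleteSpace α] {S : Set β} {P : β → Prop} {f : β → α}
    (h : Summable fun s : S => f s) : Summable fun t : {b // b ∈ S ∧ P b} => f t :=
  h.comp_injective (inclusion_injective (inter_subset_left (t := {b | P b})))

theorem ENNReal.ofReal_inv_le_of_one_le_mul {d : ℝ} {m : ℝ≥0∞} (hd : 0 < d)
    (h : 1 ≤ ENNReal.ofReal d * m) : ENNReal.ofReal d⁻¹ ≤ m := by
  rw [ENNReal.ofReal_inv_of_pos hd]
  exact (ENNReal.inv_le_iff_le_mul (fun _ => (ENNReal.ofReal_pos.mpr hd).ne')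
    (fun h => absurd h ENNReal.ofReal_ne_top)).mpr h

section

variable {Γ X : Type*} [Group Γ] [MulAction Γ X] {N : Γ →* ℝ} {Y : Set X}

theorem smul_mem_boundarySet {s : Γ} (hs₀ : 0 < N s) (hs₁ : N s ≤ 1) {u : X}
    (hu : u ∈ boundarySet N Y) (hsu : s • u ∈ Y) : s • u ∈ boundarySet N Y := by
  refine ⟨hsu, fun hmem => hu.2 ?_⟩
  simp only [mem_iUnion] at hmem ⊢
  obtain ⟨γ, hγ, hsuγ⟩ := hmem
  refine ⟨s⁻¹ * γ, ?_, ?_⟩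
  · rw [map_mul, map_inv]
    exact one_lt_mul_of_le_of_lt (one_le_inv₀ hs₀ |>.mpr hs₁) hγ
  · rwa [mul_smul, ← smul_mem_smul_set_iff (a := s), smul_inv_smul]

variable [MeasurableSpace X] {β : ℝ} {μ : Measure X}

theorem IsScaling.measure_eq_zero_of_smul_eq_self [IsFiniteMeasure μ] (hμ : IsScaling N Y β μ)
    {γ : Γ} (hγ₀ : 0 < N γ) (hγ₁ : N γ ≠ 1) (hβ : β ≠ 0) {A : Set X} (hA : MeasurableSet A)
    (hAY : A ⊆ Y) (hγA : γ • A = A) : μ A = 0 := by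
  have hscale := hμ.2 γ A hA hAY (by rwa [hγA])
  rw [hγA, eq_comm, mul_comm] at hscale
  by_contra hA0
  have hone := (ENNReal.mul_eq_left hA0 (measure_ne_top μ A)).mp hscale
  rw [ENNReal.ofReal_eq_one, ← Real.one_rpow (-β),
    Real.rpow_left_inj hγ₀.le zero_le_one (neg_ne_zero.mpr hβ)] at hone
  exact hγ₁ hone

variable [TopologicalSpace X] [BorelSpace X] [ContinuousConstSMul Γ X]

theorem measurableSet_boundarySet (hY : IsOpen Y) : MeasurableSet (boundarySet N Y) :=
  hY.measurableSet.diff (isOpen_iUnion fun γ => isOpen_iUnion fun _ => hY.smul γ).measurableSet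

namespace IsScaling

theorem measure_inter_smul_le (hμ : IsScaling N Y β μ) (hY : IsOpen Y) (s : Γ) {A : Set X}
    (hA : MeasurableSet A) (hAY : A ⊆ Y) :
    μ (Y ∩ s • A) ≤ ENNReal.ofReal (N s ^ (-β)) * μ A := by
  have hsA : Y ∩ s • A = s • (A ∩ s⁻¹ • Y) := by rw [smul_set_inter, smul_inv_smul, inter_comm]
  rw [hsA, hμ.2 s _ (hA.inter (hY.smul s⁻¹).measurableSet) (inter_subset_left.trans hAY)
    (hsA ▸ inter_subset_left)]
  gcongr
  exact inter_subset_left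

theorem measure_sdiff_boundarySet_inter_smul_le (hμ : IsScaling N Y β μ) (hY : IsOpen Y)
    (hN : ∀ γ, 0 < N γ) {U : Set X} (hU : MeasurableSet U) (hUY : U ⊆ Y) (s : Γ) :
    μ ((Y \ boundarySet N Y) ∩ s • U) ≤
      {γ | 1 < N γ}.indicator (fun γ => ENNReal.ofReal (N γ ^ (-β))) s * μ (boundarySet N Y) +
        ENNReal.ofReal (N s ^ (-β)) * μ (U \ boundarySet N Y) := by
  by_cases hs : 1 < N s
  · rw [indicator_of_mem (show s ∈ {γ | 1 < N γ} from hs), ← mul_add]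
    calc μ ((Y \ boundarySet N Y) ∩ s • U) ≤ μ (Y ∩ s • U) :=
          measure_mono (inter_subset_inter_left _ sdiff_subset)
      _ ≤ ENNReal.ofReal (N s ^ (-β)) * μ U := hμ.measure_inter_smul_le hY s hU hUY
      _ ≤ _ := by
          gcongr
          exact (measure_le_inter_add_sdiff μ U _).trans (by gcongr; exact inter_subset_right)
  · rw [indicator_of_notMem (show s ∉ {γ | 1 < N γ} from hs), zero_mul, zero_add]
    refine (measure_mono ?_).trans (hμ.measure_inter_smul_le hY s
      (hU.diff (measurableSet_boundarySet hY)) (sdiff_subset.trans hUY))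
    rintro _ ⟨⟨hxY, hxY₀⟩, u, huU, rfl⟩
    exact ⟨hxY, u, ⟨huU, fun hu => hxY₀ (smul_mem_boundarySet (hN s) (not_lt.mp hs) hu hxY)⟩, rfl⟩

theorem measure_sdiff_boundarySet_le_add [Countable Γ] (hμ : IsScaling N Y β μ) (hY : IsOpen Y)
    (hN : ∀ γ, 0 < N γ) {Z : Set X} (hZ : μ Z = 0) {U : Set X} (hU : MeasurableSet U)
    (hUY : U ⊆ Y) (hcov : Y \ ⋃ s ∈ Sset N Y, s • U ⊆ Z) :
    μ (Y \ boundarySet N Y) ≤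
      (∑' t : {γ : Γ // γ ∈ Sset N Y ∧ 1 < N γ}, ENNReal.ofReal (N t.1 ^ (-β))) *
          μ (boundarySet N Y) +
        (∑' s : Sset N Y, ENNReal.ofReal (N s.1 ^ (-β))) * μ (U \ boundarySet N Y) := by
  have hD : ∑' s : Sset N Y, {γ | 1 < N γ}.indicator (fun γ => ENNReal.ofReal (N γ ^ (-β))) s =
      ∑' t : {γ : Γ // γ ∈ Sset N Y ∧ 1 < N γ}, ENNReal.ofReal (N t.1 ^ (-β)) := by
    rw [tsum_subtype, indicator_indicator, ← tsum_subtype]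
    rfl
  calc μ (Y \ boundarySet N Y) ≤ ∑' s : Sset N Y, μ ((Y \ boundarySet N Y) ∩ s.1 • U) :=
        measure_le_tsum_inter_of_sdiff_subset_null (Sset N Y).to_countable hZ
          ((sdiff_subset_sdiff_left sdiff_subset).trans hcov)
    _ ≤ _ := ENNReal.tsum_le_tsum fun s => hμ.measure_sdiff_boundarySet_inter_smul_le hY hN hU hUY s
    _ = _ := by rw [ENNReal.tsum_add, ENNReal.tsum_mul_right, ENNReal.tsum_mul_right, hD]

theorem measure_sdiff_boundarySet_le [Countable Γ] [IsFiniteMeasure μ] [μ.OuterRegular]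
    (hμ : IsScaling N Y β μ) (hY : IsOpen Y) (hN : ∀ γ, 0 < N γ)
    (hsum : ∑' s : Sset N Y, ENNReal.ofReal (N s.1 ^ (-β)) ≠ ∞) {Z : Set X} (hZ : μ Z = 0)
    (hi : ∀ U : Set X, IsOpen U → boundarySet N Y ⊆ U → Y \ (⋃ s ∈ Sset N Y, s • U) ⊆ Z) :
    μ (Y \ boundarySet N Y) ≤
      (∑' t : {γ : Γ // γ ∈ Sset N Y ∧ 1 < N γ}, ENNReal.ofReal (N t.1 ^ (-β))) *
        μ (boundarySet N Y) := by
  refine ENNReal.le_of_forall_pos_le_add_mul hsum fun ε hε => ?_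
  obtain ⟨U, hY₀U, hUo, -, hUε⟩ :=
    (measurableSet_boundarySet (N := N) hY).exists_isOpen_sdiff_lt (measure_ne_top μ _) hε.ne'
  have hUY := hUo.inter hY
  refine (hμ.measure_sdiff_boundarySet_le_add hY hN hZ hUY.measurableSet inter_subset_right
    (hi _ hUY (subset_inter hY₀U sdiff_subset))).trans ?_
  gcongr
  exact (measure_mono (sdiff_subset_sdiff_left inter_subset_left)).trans hUε.le

end IsScaling

end

theorem scaling_measure_boundary_lower_bound_general
    {Γ X : Type*} [Group Γ] [Countable Γ]
    [TopologicalSpace X] [LocallyCompactSpace X] [SecondCountableTopology X] [T2Space X]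
    [MeasurableSpace X] [BorelSpace X] [MulAction Γ X] [ContinuousConstSMul Γ X]
    (N : Γ →* ℝ) (hN : ∀ γ, 0 < N γ)
    (Y : Set X) (hY : IsClopen Y)
    (Yn : ℕ → Set X) (γn : ℕ → Γ)
    (hYnMeas : ∀ n, MeasurableSet (Yn n)) (hYnSub : ∀ n, Yn n ⊆ Y)
    (hi : ∀ U : Set X, IsOpen U → boundarySet N Y ⊆ U →
      Y \ (⋃ s ∈ Sset N Y, s • U) ⊆ ⋃ n, Yn n)
    (hii : ∀ n, N (γn n) ≠ 1 ∧ γn n • Yn n = Yn n)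
    (β : ℝ) (hβ : β ≠ 0)
    (hsum : Summable (fun s : Sset N Y => N s.1 ^ (-β)))
    (μ : Measure X) [IsProbabilityMeasure μ] (hμ : IsScaling N Y β μ) :
    μ (Y \ boundarySet N Y) ≤ μ (boundarySet N Y) *
        ENNReal.ofReal (∑' s : {γ : Γ // γ ∈ Sset N Y ∧ 1 < N γ}, N s.1 ^ (-β)) ∧
      ENNReal.ofReal ((1 + ∑' s : {γ : Γ // γ ∈ Sset N Y ∧ 1 < N γ}, N s.1 ^ (-β))⁻¹) ≤
        μ (boundarySet N Y) := by
  let D := ∑' s : {γ : Γ // γ ∈ Sset N Y ∧ 1 < N γ}, N s.1 ^ (-β)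
  have hpos (γ : Γ) : 0 ≤ N γ ^ (-β) := Real.rpow_nonneg (hN γ).le _
  have hD : ENNReal.ofReal D = ∑' t : {γ : Γ // γ ∈ Sset N Y ∧ 1 < N γ},
      ENNReal.ofReal (N t.1 ^ (-β)) :=
    ENNReal.ofReal_tsum_of_nonneg (fun t => hpos t.1) (hsum.subtype_and (f := fun γ => N γ ^ (-β)))
  have hK : ∑' s : Sset N Y, ENNReal.ofReal (N s.1 ^ (-β)) ≠ ∞ :=
    ENNReal.ofReal_tsum_of_nonneg (f := fun s : Sset N Y => N s.1 ^ (-β)) (fun s => hpos s.1) hsum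
      ▸ ENNReal.ofReal_ne_top
  have hnull : μ (⋃ n, Yn n) = 0 := measure_iUnion_null fun n =>
    hμ.measure_eq_zero_of_smul_eq_self (hN _) (hii n).1 hβ (hYnMeas n) (hYnSub n) (hii n).2
  have hfirst : μ (Y \ boundarySet N Y) ≤ μ (boundarySet N Y) * ENNReal.ofReal D := by
    rw [hD, mul_comm]
    exact hμ.measure_sdiff_boundarySet_le hY.isOpen hN hK hnull hi
  have hD₀ : 0 ≤ D := tsum_nonneg fun t => hpos t.1
  refine ⟨hfirst, ENNReal.ofReal_inv_le_of_one_le_mul (by linarith) ?_⟩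
  rw [ENNReal.ofReal_add zero_le_one hD₀, ENNReal.ofReal_one]
  exact one_le_one_add_mul_of_measure_sdiff_le hY.isOpen.measurableSet hμ.1 hfirst

/-- Under the standing hypotheses (i) and (ii), for a nonzero `β ∈ ℝ` such
that `(N(s)^{-β})_{s ∈ S}` is summable, every `β`-scaling Borel probability measure `μ` on `X`
satisfies `μ(Y \ Y₀) ≤ μ(Y₀) · Σ_{s ∈ S, N(s) > 1} N(s)^{-β}`, and consequently
`μ(Y₀) ≥ (1 + Σ_{s ∈ S, N(s) > 1} N(s)^{-β})⁻¹`. -/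
theorem scaling_measure_boundary_lower_bound
    {Γ X : Type*} [Group Γ] [Countable Γ]
    [TopologicalSpace X] [LocallyCompactSpace X] [SecondCountableTopology X] [T2Space X]
    [MeasurableSpace X] [BorelSpace X] [MulAction Γ X] [ContinuousConstSMul Γ X]
    (N : Γ →* ℝ) (hN : ∀ γ, 0 < N γ)
    (Y : Set X) (hY : IsClopen Y) (hYcov : (⋃ γ : Γ, γ • Y) = Set.univ)
    (Yn : ℕ → Set X) (γn : ℕ → Γ)
    (hYnMeas : ∀ n, MeasurableSet (Yn n)) (hYnSub : ∀ n, Yn n ⊆ Y)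
    (hi : ∀ U : Set X, IsOpen U → boundarySet N Y ⊆ U →
      Y \ (⋃ s ∈ Sset N Y, s • U) ⊆ ⋃ n, Yn n)
    (hii : ∀ n, N (γn n) ≠ 1 ∧ γn n • Yn n = Yn n)
    (β : ℝ) (hβ : β ≠ 0)
    (hsum : Summable (fun s : Sset N Y => N s.1 ^ (-β)))
    (μ : Measure X) [IsProbabilityMeasure μ] (hμ : IsScaling N Y β μ) :
    μ (Y \ boundarySet N Y) ≤ μ (boundarySet N Y) *
        ENNReal.ofReal (∑' s : {γ : Γ // γ ∈ Sset N Y ∧ 1 < N γ}, N s.1 ^ (-β)) ∧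
      ENNReal.ofReal ((1 + ∑' s : {γ : Γ // γ ∈ Sset N Y ∧ 1 < N γ}, N s.1 ^ (-β))⁻¹) ≤
        μ (boundarySet N Y) :=
  scaling_measure_boundary_lower_bound_general N hN Y hY Yn γn hYnMeas hYnSub hi hii β hβ hsum μ hμ
end

section
/- Assume the narrow class group of K is finite. For ω ∈ Ô the following are equivalent: (a) ω is a boundary element, i.e. there is no totally positive x ∈ K with |N_{K/ℚ}(x)| > 1 such that v(ω_v) ≥ v(x) for every finite place v; (b) there exists a nonzero integral ideal 𝔞 of 𝒪 of minimal norm in its narrow class such that v(ω_v) = v(𝔞) for every finite place v. In particular, every boundary element ω has all components ω_v nonzero, with v(ω_v) = 0 for all but finitely many v. -/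
open NumberField FractionalIdeal
open scoped nonZeroDivisors

/-- Two fractional ideals of a number field are *narrowly equivalent* if they differ by
multiplication by a principal fractional ideal with a totally positive generator. -/
def NarrowEquiv (K : Type*) [Field K] [NumberField K]
    (I J : FractionalIdeal (𝓞 K)⁰ K) : Prop :=
  ∃ x : K, x ≠ 0 ∧ TotallyPositive K x ∧ I = spanSingleton (𝓞 K)⁰ x * J

/-- Narrow equivalence of integral ideals. -/
def NarrowEquivI (K : Type*) [Field K] [NumberField K] (I J : Ideal (𝓞 K)) : Prop :=
  NarrowEquiv K (I : FractionalIdeal (𝓞 K)⁰ K) (J : FractionalIdeal (𝓞 K)⁰ K)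

/-- A nonzero integral ideal has *minimal norm in its narrow class* if its absolute norm is
smallest among all nonzero integral ideals narrowly equivalent to it. -/
def MinNorm (K : Type*) [Field K] [NumberField K] (I : Ideal (𝓞 K)) : Prop :=
  ∀ J : Ideal (𝓞 K), J ≠ 0 → NarrowEquivI K J I → Ideal.absNorm I ≤ Ideal.absNorm J

/-- Finiteness of the narrow class group of `K`: there are only finitely many narrow
equivalence classes of nonzero fractional ideals. -/
def NarrowClassFinite (K : Type*) [Field K] [NumberField K] : Prop :=
  ∃ F : Finset (FractionalIdeal (𝓞 K)⁰ K),
    ∀ I : FractionalIdeal (𝓞 K)⁰ K, I ≠ 0 → ∃ J ∈ F, NarrowEquiv K I J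

open IsDedekindDomain
open scoped Classical

/-- The multiplicative `v`-adic value of a nonzero integral ideal `I`:
`ofAdd(-(multiplicity of v in the factorization of I))`, and `0` for `I = 0`. -/
noncomputable def idealFactorVal (K : Type*) [Field K] [NumberField K]
    (v : HeightOneSpectrum (𝓞 K)) (I : Ideal (𝓞 K)) : WithZero (Multiplicative ℤ) :=
  if I = 0 then 0
  else ↑(Multiplicative.ofAdd
    (-((Associates.mk v.asIdeal).count (Associates.mk I).factors : ℤ)))

/-- An integral finite adele `ω ∈ Ô = ∏_v 𝒪_v` is a *boundary element* if there is no totally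
positive `x ∈ K` with `|N_{K/ℚ}(x)| > 1` such that `v(ω_v) ≥ v(x)` for every finite place `v`
(equivalently, in multiplicative notation, the value of `ω_v` is at most the value of `x`). -/
def IsBoundaryElt (K : Type*) [Field K] [NumberField K]
    (ω : ∀ v : HeightOneSpectrum (𝓞 K), v.adicCompletionIntegers K) : Prop :=
  ¬ ∃ x : K, x ≠ 0 ∧ TotallyPositive K x ∧ 1 < |Algebra.norm ℚ x| ∧
    ∀ v : HeightOneSpectrum (𝓞 K),
      Valued.v ((ω v : v.adicCompletion K)) ≤ v.valuation K x

/-! If `v(ω_v) = v(𝔞)` for all `v`, a totally positive `x` with `v(ω_v) ≥ v(x)` everywhere is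
the same as a totally positive `x` with `𝔞 ⊆ x𝒪`, and then `x⁻¹𝔞` is an integral ideal narrowly
equivalent to `𝔞` of norm `N(𝔞) / |N(x)|`; so `ω` is a boundary element iff `𝔞` has minimal norm
in its narrow class.

It remains to see that a boundary element comes from an ideal, i.e. that `ω_v ≠ 0` for all `v`
and `v(ω_v) = 0` for almost all `v`. Otherwise `ω` is divisible by every member of a chain
`P₀ ⊋ P₀P₁ ⊋ P₀P₁P₂ ⊋ ⋯` of products of primes (all equal to one `v` with `ω_v = 0`, or distinct
ones with `v(ω_v) > 0`). Finiteness of the narrow class group puts two members of the chain in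
the same narrow class, so their quotient `C ≠ 𝒪` has a totally positive generator `y`; it divides
`ω`, and `|N(y)| = N(C) > 1`. -/

open scoped WithZero Finset

theorem WithZero.le_exp_neg_one_of_lt_one {x : ℤᵐ⁰} (hx : x < 1) : x ≤ WithZero.exp (-1) := by
  rcases eq_or_ne x 0 with rfl | hx0
  · exact _root_.zero_le
  rw [← WithZero.exp_zero, ← WithZero.log_lt_iff_lt_exp hx0] at hx
  rw [← WithZero.log_le_iff_le_exp hx0]
  omega

namespace FractionalIdeal

variable {R : Type*} [CommRing R] [IsDedekindDomain R] {K : Type*} [Field K] [Algebra R K]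
  [IsFractionRing R K]

theorem le_one_of_count_nonneg {I : FractionalIdeal R⁰ K}
    (hI : ∀ v : HeightOneSpectrum R, 0 ≤ count K v I) : I ≤ 1 := by
  rcases eq_or_ne I 0 with rfl | hI0
  · exact zero_le _
  rw [← finprod_heightOneSpectrum_factorization' (K := K) hI0]
  refine finprod_induction (· ≤ 1) le_rfl (fun _ _ => mul_le_one') fun v => ?_
  lift count K v I to ℕ using hI v with n
  rw [zpow_natCast, ← coeIdeal_pow]
  exact coeIdeal_le_one

theorem le_iff_forall_count_le {I J : FractionalIdeal R⁰ K} (hI : I ≠ 0) (hJ : J ≠ 0) :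
    I ≤ J ↔ ∀ v : HeightOneSpectrum R, count K v J ≤ count K v I := by
  refine ⟨fun h v => count_mono K v hI h, fun h => ?_⟩
  have hquot : J⁻¹ * I ≤ 1 := le_one_of_count_nonneg fun v => by
    rw [count_mul K v (inv_ne_zero hJ) hI, count_inv]
    linarith [h v]
  calc I = J * (J⁻¹ * I) := (mul_inv_cancel_left₀ hJ I).symm
    _ ≤ J * 1 := mul_le_mul_right hquot J
    _ = J := mul_one J

theorem count_coeIdeal_prod (v : HeightOneSpectrum R) {ι : Type*} (s : Finset ι)
    (P : ι → HeightOneSpectrum R) :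
    count K v ((∏ i ∈ s, (P i).asIdeal : Ideal R) : FractionalIdeal R⁰ K) =
      #{i ∈ s | P i = v} := by
  have hprod : ((∏ i ∈ s, (P i).asIdeal : Ideal R) : FractionalIdeal R⁰ K) =
      ∏ i ∈ s, ((P i).asIdeal : FractionalIdeal R⁰ K) :=
    map_prod (coeIdealHom R⁰ K) _ s
  rw [hprod, count_prod _ _ _ _ fun i _ => coeIdeal_ne_zero.mpr (P i).ne_bot]
  simp only [count_maximal, Finset.sum_boole]

end FractionalIdeal

namespace IsDedekindDomain.HeightOneSpectrum

variable {R : Type*} [CommRing R] [IsDedekindDomain R] {K : Type*} [Field K] [Algebra R K]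
  [IsFractionRing R K]

theorem valuation_eq_exp_neg_count (v : HeightOneSpectrum R) {x : K} (hx : x ≠ 0) :
    v.valuation K x = WithZero.exp (-FractionalIdeal.count K v (spanSingleton R⁰ x)) := by
  obtain ⟨⟨r, s⟩, rfl⟩ := IsLocalization.mk'_surjective R⁰ x
  have hr : r ≠ 0 := by rintro rfl; simp at hx
  have hrepr : spanSingleton R⁰ (IsLocalization.mk' K r s) =
      spanSingleton R⁰ ((algebraMap R K) (s : R))⁻¹ * ↑(Ideal.span {r}) := by
    rw [coeIdeal_span_singleton, spanSingleton_mul_spanSingleton,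
      IsFractionRing.mk'_eq_div, div_eq_inv_mul]
  rw [FractionalIdeal.count_well_defined K v (by simpa [spanSingleton_eq_zero_iff,
      IsLocalization.mk'_eq_zero_iff] using hx) hrepr,
    v.valuation_of_mk', intValuation_if_neg _ hr,
    intValuation_if_neg _ (nonZeroDivisors.coe_ne_zero s), ← WithZero.exp_sub]
  congr 1
  ring

end IsDedekindDomain.HeightOneSpectrum

theorem TotallyPositive.inv {K : Type*} [Field K] {x : K} (hx : TotallyPositive K x) :
    TotallyPositive K x⁻¹ :=
  fun φ => by simpa only [map_inv₀, inv_pos] using hx φ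

theorem TotallyPositive.mul {K : Type*} [Field K] {x y : K} (hx : TotallyPositive K x)
    (hy : TotallyPositive K y) : TotallyPositive K (x * y) :=
  fun φ => by simpa only [map_mul] using mul_pos (hx φ) (hy φ)

section NumberField

variable {K : Type*} [Field K] [NumberField K]

theorem NarrowEquiv.symm {I J : FractionalIdeal (𝓞 K)⁰ K} (h : NarrowEquiv K I J) :
    NarrowEquiv K J I := by
  obtain ⟨x, hx0, hxP, rfl⟩ := h
  refine ⟨x⁻¹, inv_ne_zero hx0, hxP.inv, ?_⟩
  rw [← mul_assoc, spanSingleton_mul_spanSingleton, inv_mul_cancel₀ hx0, spanSingleton_one,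
    one_mul]

theorem NarrowEquiv.trans {I J L : FractionalIdeal (𝓞 K)⁰ K} (hIJ : NarrowEquiv K I J)
    (hJL : NarrowEquiv K J L) : NarrowEquiv K I L := by
  obtain ⟨x, hx0, hxP, rfl⟩ := hIJ
  obtain ⟨y, hy0, hyP, rfl⟩ := hJL
  exact ⟨x * y, mul_ne_zero hx0 hy0, hxP.mul hyP, by
    rw [← mul_assoc, spanSingleton_mul_spanSingleton]⟩

theorem idealFactorVal_eq_exp_neg_count (v : HeightOneSpectrum (𝓞 K)) {𝔞 : Ideal (𝓞 K)}
    (h𝔞 : 𝔞 ≠ 0) : idealFactorVal K v 𝔞 = WithZero.exp (-FractionalIdeal.count K v 𝔞) := by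
  rw [idealFactorVal, if_neg h𝔞, FractionalIdeal.count_coe K v h𝔞]
  rfl

theorem absNorm_eq_abs_norm_mul_absNorm {x : K} {J A : Ideal (𝓞 K)}
    (h : (J : FractionalIdeal (𝓞 K)⁰ K) = spanSingleton (𝓞 K)⁰ x * A) :
    (Ideal.absNorm J : ℚ) = |Algebra.norm ℚ x| * Ideal.absNorm A := by
  simpa only [coeIdeal_absNorm, map_mul, FractionalIdeal.absNorm_span_singleton]
    using congrArg FractionalIdeal.absNorm h

theorem minNorm_iff_not_exists_le_spanSingleton {𝔞 : Ideal (𝓞 K)} (h𝔞 : 𝔞 ≠ 0) :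
    MinNorm K 𝔞 ↔ ¬ ∃ x : K, x ≠ 0 ∧ TotallyPositive K x ∧ 1 < |Algebra.norm ℚ x| ∧
      (𝔞 : FractionalIdeal (𝓞 K)⁰ K) ≤ spanSingleton (𝓞 K)⁰ x := by
  have hN𝔞 : (0 : ℚ) < Ideal.absNorm 𝔞 := by
    exact_mod_cast Nat.pos_of_ne_zero (Ideal.absNorm_ne_zero_of_nonZeroDivisors ⟨𝔞, by simpa⟩)
  constructor
  · rintro hmin ⟨x, hx0, hxP, hNx, hle⟩
    obtain ⟨J, hJ⟩ : ∃ J : Ideal (𝓞 K), (J : FractionalIdeal (𝓞 K)⁰ K) =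
        spanSingleton (𝓞 K)⁰ x⁻¹ * 𝔞 := by
      rw [← le_one_iff_exists_coeIdeal]
      calc spanSingleton (𝓞 K)⁰ x⁻¹ * 𝔞 ≤ spanSingleton (𝓞 K)⁰ x⁻¹ * spanSingleton (𝓞 K)⁰ x :=
            mul_le_mul_right hle _
        _ = 1 := by rw [spanSingleton_mul_spanSingleton, inv_mul_cancel₀ hx0, spanSingleton_one]
    have hJ0 : J ≠ 0 := coeIdeal_ne_zero.mp <| hJ ▸
      mul_ne_zero (spanSingleton_ne_zero_iff.mpr (inv_ne_zero hx0)) (coeIdeal_ne_zero.mpr h𝔞)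
    have hNJ := absNorm_eq_abs_norm_mul_absNorm hJ
    rw [Algebra.norm_inv, abs_inv] at hNJ
    have hlt : (Ideal.absNorm J : ℚ) < Ideal.absNorm 𝔞 := by
      rw [hNJ]
      exact mul_lt_of_lt_one_left hN𝔞 (inv_lt_one_of_one_lt₀ hNx)
    exact (hmin J hJ0 ⟨x⁻¹, inv_ne_zero hx0, hxP.inv, hJ⟩).not_gt (by exact_mod_cast hlt)
  · rintro hno J hJ0 ⟨y, hy0, hyP, hJ⟩
    by_contra! hlt
    have hNy : |Algebra.norm ℚ y| < 1 := by
      have hlt' : (Ideal.absNorm J : ℚ) < Ideal.absNorm 𝔞 := by exact_mod_cast hlt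
      rw [absNorm_eq_abs_norm_mul_absNorm hJ] at hlt'
      exact (mul_lt_iff_lt_one_left hN𝔞).mp hlt'
    refine hno ⟨y⁻¹, inv_ne_zero hy0, hyP.inv, ?_, ?_⟩
    · rw [Algebra.norm_inv, abs_inv]
      exact one_lt_inv₀ (abs_pos.mpr (Algebra.norm_ne_zero_iff.mpr hy0)) |>.mpr hNy
    · calc (𝔞 : FractionalIdeal (𝓞 K)⁰ K) = spanSingleton (𝓞 K)⁰ y⁻¹ * J := by
            rw [hJ, ← mul_assoc, spanSingleton_mul_spanSingleton, inv_mul_cancel₀ hy0,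
              spanSingleton_one, one_mul]
        _ ≤ spanSingleton (𝓞 K)⁰ y⁻¹ * 1 := mul_le_mul_right coeIdeal_le_one _
        _ = spanSingleton (𝓞 K)⁰ y⁻¹ := mul_one _

theorem NarrowClassFinite.exists_lt_narrowEquiv (hfin : NarrowClassFinite K)
    (I : ℕ → FractionalIdeal (𝓞 K)⁰ K) (hI : ∀ n, I n ≠ 0) :
    ∃ i j, i < j ∧ NarrowEquiv K (I i) (I j) := by
  obtain ⟨F, hF⟩ := hfin
  choose g hgF hg using fun n => hF (I n) (hI n)
  obtain ⟨i, j, hij, hgij⟩ := F.finite_toSet.exists_lt_map_eq_of_forall_mem hgF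
  exact ⟨i, j, hij, (hg i).trans (hgij ▸ (hg j).symm)⟩

theorem spanSingleton_inv_eq_of_coeIdeal_eq_mul {A C : Ideal (𝓞 K)} (hA : A ≠ 0) {x : K}
    (h : (A : FractionalIdeal (𝓞 K)⁰ K) = spanSingleton (𝓞 K)⁰ x * ↑(A * C)) :
    spanSingleton (𝓞 K)⁰ x⁻¹ = C := by
  rw [coeIdeal_mul, mul_left_comm] at h
  have hxC : spanSingleton (𝓞 K)⁰ x * C = 1 :=
    mul_left_cancel₀ (coeIdeal_ne_zero.mpr hA) (by rw [mul_one, ← h])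
  rw [← spanSingleton_inv]
  exact inv_eq_of_mul_eq_one_right hxC

variable {ω : ∀ v : HeightOneSpectrum (𝓞 K), v.adicCompletionIntegers K}

theorem forall_valued_le_valuation_iff {𝔞 : Ideal (𝓞 K)} (h𝔞 : 𝔞 ≠ 0)
    (hω : ∀ v, Valued.v (ω v : v.adicCompletion K) = idealFactorVal K v 𝔞)
    {x : K} (hx : x ≠ 0) :
    (∀ v, Valued.v (ω v : v.adicCompletion K) ≤ v.valuation K x) ↔
      (𝔞 : FractionalIdeal (𝓞 K)⁰ K) ≤ spanSingleton (𝓞 K)⁰ x := by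
  rw [FractionalIdeal.le_iff_forall_count_le (coeIdeal_ne_zero.mpr h𝔞)
    (spanSingleton_ne_zero_iff.mpr hx)]
  simp only [hω, idealFactorVal_eq_exp_neg_count _ h𝔞,
    HeightOneSpectrum.valuation_eq_exp_neg_count _ hx, WithZero.exp_le_exp, neg_le_neg_iff]

theorem isBoundaryElt_iff_minNorm {𝔞 : Ideal (𝓞 K)} (h𝔞 : 𝔞 ≠ 0)
    (hω : ∀ v, Valued.v (ω v : v.adicCompletion K) = idealFactorVal K v 𝔞) :
    IsBoundaryElt K ω ↔ MinNorm K 𝔞 := by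
  rw [minNorm_iff_not_exists_le_spanSingleton h𝔞, IsBoundaryElt]
  refine not_congr (exists_congr fun x => and_congr_right fun hx => ?_)
  rw [forall_valued_le_valuation_iff h𝔞 hω hx]

theorem exists_ideal_forall_valued_eq_idealFactorVal
    (hω0 : ∀ v, (ω v : v.adicCompletion K) ≠ 0)
    (hω1 : {v : HeightOneSpectrum (𝓞 K) | Valued.v (ω v : v.adicCompletion K) ≠ 1}.Finite) :
    ∃ 𝔞 : Ideal (𝓞 K), 𝔞 ≠ 0 ∧
      ∀ v, Valued.v (ω v : v.adicCompletion K) = idealFactorVal K v 𝔞 := by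
  set e : HeightOneSpectrum (𝓞 K) → ℤ :=
    fun v => -WithZero.log (Valued.v (ω v : v.adicCompletion K))
  have he : ∀ v, WithZero.exp (-e v) = Valued.v (ω v : v.adicCompletion K) := fun v => by
    simp [e, hω0 v]
  have he0 : ∀ v, 0 ≤ e v := fun v => by
    have hle1 := (HeightOneSpectrum.mem_adicCompletionIntegers (𝓞 K) K v).mp (ω v).2
    rw [← he, ← WithZero.exp_zero, WithZero.exp_le_exp] at hle1
    omega
  have hcof : ∀ᶠ v in Filter.cofinite, e v = 0 :=
    hω1.subset fun v hv h1 => hv (show e v = 0 by simp [e, h1])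
  set I : FractionalIdeal (𝓞 K)⁰ K := ∏ᶠ v : HeightOneSpectrum (𝓞 K), (v.asIdeal : _) ^ e v
  have hcount : ∀ v, FractionalIdeal.count K v I = e v := fun v =>
    FractionalIdeal.count_finprod K v e hcof
  have hI0 : I ≠ 0 := finprod_induction (· ≠ 0) one_ne_zero (fun _ _ => mul_ne_zero)
    fun v => zpow_ne_zero _ (coeIdeal_ne_zero.mpr v.ne_bot)
  obtain ⟨𝔞, h𝔞⟩ := le_one_iff_exists_coeIdeal.mp
    (FractionalIdeal.le_one_of_count_nonneg fun v => hcount v ▸ he0 v)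
  have h𝔞0 : 𝔞 ≠ 0 := coeIdeal_ne_zero.mp (h𝔞 ▸ hI0)
  refine ⟨𝔞, h𝔞0, fun v => ?_⟩
  rw [idealFactorVal_eq_exp_neg_count _ h𝔞0, h𝔞, hcount, he]

theorem not_isBoundaryElt_of_spanSingleton_eq {y : K} (hyP : TotallyPositive K y)
    {C : Ideal (𝓞 K)} (hC0 : C ≠ 0) (hC : C ≠ ⊤)
    (hy : spanSingleton (𝓞 K)⁰ y = C)
    (hω : ∀ v, Valued.v (ω v : v.adicCompletion K) ≤ idealFactorVal K v C) :
    ¬ IsBoundaryElt K ω := by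
  have hy0 : y ≠ 0 := by
    rintro rfl
    exact hC0 (by simpa [eq_comm] using hy)
  refine fun hb => hb ⟨y, hy0, hyP, ?_, fun v => ?_⟩
  · rw [← FractionalIdeal.absNorm_span_singleton (𝓞 K), hy, coeIdeal_absNorm, Nat.one_lt_cast]
    have h0 : Ideal.absNorm C ≠ 0 := by simpa [Ideal.absNorm_eq_zero_iff] using hC0
    have h1 : Ideal.absNorm C ≠ 1 := by simpa [Ideal.absNorm_eq_one_iff] using hC
    omega
  · rw [HeightOneSpectrum.valuation_eq_exp_neg_count _ hy0, hy,
      ← idealFactorVal_eq_exp_neg_count _ hC0]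
    exact hω v

-- `hω` says that `ω` is divisible by `∏ n ∈ s, P n` for every finite `s`.
theorem NarrowClassFinite.not_isBoundaryElt_of_forall_le_exp_neg_card
    (hfin : NarrowClassFinite K) (P : ℕ → HeightOneSpectrum (𝓞 K))
    (hω : ∀ (s : Finset ℕ) (v : HeightOneSpectrum (𝓞 K)),
      Valued.v (ω v : v.adicCompletion K) ≤ WithZero.exp (-(#{n ∈ s | P n = v} : ℤ))) :
    ¬ IsBoundaryElt K ω := by
  set A : ℕ → Ideal (𝓞 K) := fun m => ∏ n ∈ Finset.range m, (P n).asIdeal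
  have hA0 : ∀ m, A m ≠ 0 := fun m => Finset.prod_ne_zero_iff.mpr fun n _ => (P n).ne_bot
  obtain ⟨i, j, hij, x, -, hxP, hx⟩ := hfin.exists_lt_narrowEquiv (fun m => (A m : _))
    fun m => coeIdeal_ne_zero.mpr (hA0 m)
  set C := ∏ n ∈ Finset.Ico i j, (P n).asIdeal
  have hAC : A j = A i * C := (Finset.prod_range_mul_prod_Ico _ hij.le).symm
  have hC0 : C ≠ 0 := Finset.prod_ne_zero_iff.mpr fun n _ => (P n).ne_bot
  have hC : C ≠ ⊤ := fun h => (P i).isPrime.ne_top <| top_le_iff.mp <| h ▸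
    Ideal.le_of_dvd (Finset.dvd_prod_of_mem _ (Finset.mem_Ico.mpr ⟨le_rfl, hij⟩))
  rw [hAC] at hx
  refine not_isBoundaryElt_of_spanSingleton_eq hxP.inv hC0 hC
    (spanSingleton_inv_eq_of_coeIdeal_eq_mul (hA0 i) hx) fun v => ?_
  rw [idealFactorVal_eq_exp_neg_count _ hC0, FractionalIdeal.count_coeIdeal_prod]
  exact hω _ v

theorem IsBoundaryElt.ne_zero (hb : IsBoundaryElt K ω) (hfin : NarrowClassFinite K)
    (v : HeightOneSpectrum (𝓞 K)) : (ω v : v.adicCompletion K) ≠ 0 := by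
  intro hv
  refine hfin.not_isBoundaryElt_of_forall_le_exp_neg_card (fun _ => v) (fun s w => ?_) hb
  rcases eq_or_ne v w with rfl | hvw
  · rw [hv, map_zero]
    exact zero_le
  · simpa [hvw] using (HeightOneSpectrum.mem_adicCompletionIntegers (𝓞 K) K w).mp (ω w).2

theorem IsBoundaryElt.finite_valued_ne_one (hb : IsBoundaryElt K ω)
    (hfin : NarrowClassFinite K) :
    {v : HeightOneSpectrum (𝓞 K) | Valued.v (ω v : v.adicCompletion K) ≠ 1}.Finite := by
  by_contra hinf
  let f := Set.Infinite.natEmbedding _ hinf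
  refine hfin.not_isBoundaryElt_of_forall_le_exp_neg_card (fun n => f n) (fun s v => ?_) hb
  have hle1 := (HeightOneSpectrum.mem_adicCompletionIntegers (𝓞 K) K v).mp (ω v).2
  have hcard : #{n ∈ s | (f n : HeightOneSpectrum (𝓞 K)) = v} ≤ 1 :=
    Finset.card_le_one.mpr fun a ha b hb => f.injective <| Subtype.ext <|
      (Finset.mem_filter.mp ha).2.trans (Finset.mem_filter.mp hb).2.symm
  interval_cases h : #{n ∈ s | (f n : HeightOneSpectrum (𝓞 K)) = v}
  · simpa using hle1
  · obtain ⟨n, hn⟩ := Finset.card_eq_one.mp h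
    have hn' : n ∈ ({n ∈ s | (f n : HeightOneSpectrum (𝓞 K)) = v} : Finset ℕ) :=
      hn ▸ Finset.mem_singleton_self n
    have hfn : (f n : HeightOneSpectrum (𝓞 K)) = v := (Finset.mem_filter.mp hn').2
    exact WithZero.le_exp_neg_one_of_lt_one (lt_of_le_of_ne hle1 (hfn ▸ (f n).2))

end NumberField

/-- Assume the narrow class group of `K` is finite. An integral adele
`ω ∈ Ô` is a boundary element if and only if there is a nonzero integral ideal `𝔞` of
minimal norm in its narrow class with `v(ω_v) = v(𝔞)` for all finite places `v`. In
particular, every boundary element has all components nonzero, with `v(ω_v) = 0` for all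
but finitely many `v`. -/
theorem boundary_elt_iff_minimal_ideal_valuations (K : Type*) [Field K] [NumberField K]
    (hfin : NarrowClassFinite K)
    (ω : ∀ v : HeightOneSpectrum (𝓞 K), v.adicCompletionIntegers K) :
    (IsBoundaryElt K ω ↔ ∃ 𝔞 : Ideal (𝓞 K), 𝔞 ≠ 0 ∧ MinNorm K 𝔞 ∧
        ∀ v : HeightOneSpectrum (𝓞 K),
          Valued.v ((ω v : v.adicCompletion K)) = idealFactorVal K v 𝔞) ∧
      (IsBoundaryElt K ω →
        (∀ v : HeightOneSpectrum (𝓞 K), ((ω v : v.adicCompletion K)) ≠ 0) ∧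
        {v : HeightOneSpectrum (𝓞 K) |
          Valued.v ((ω v : v.adicCompletion K)) ≠ 1}.Finite) := by
  refine ⟨⟨fun hb => ?_, fun ⟨𝔞, h𝔞, hmin, hω⟩ => (isBoundaryElt_iff_minNorm h𝔞 hω).mpr hmin⟩,
    fun hb => ⟨hb.ne_zero hfin, hb.finite_valued_ne_one hfin⟩⟩
  obtain ⟨𝔞, h𝔞, hω⟩ :=
    exists_ideal_forall_valued_eq_idealFactorVal (hb.ne_zero hfin) (hb.finite_valued_ne_one hfin)
  exact ⟨𝔞, h𝔞, (isBoundaryElt_iff_minNorm h𝔞 hω).mp hb, hω⟩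
end
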